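/- arXiv:2304.12110 — 3 statements merged into one kernel-verified Lean document; each statement's English description precedes it below -/
import Mathlib

section
/- Let E be a finite set and q ∈ [0,1]. Let μ be a probability measure on {0,1}^E. Suppose there is an exploration of E (an adapted ordering: the first coordinate queried is deterministic, and each subsequent coordinate queried depends only on the identities and values of previously queried coordinates) such that for every step k and every exploration history (e,x) of positive μ-probability, the conditional probability under μ that the (k+1)-st queried coordinate equals 1, given the history, is at least q. Then the product Bernoulli measure of parameter q on {0,1}^E is stochastically dominated by μ, i.e. μ_q[A] ≤ μ[A] for every increasing (monotone) subset A of {0,1}^E. -/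
open MeasureTheory ProbabilityTheory
open scoped ENNReal

/-- The Bernoulli measure on `Bool` with parameter `p` (truncated to `[0,1]`). -/
noncomputable def bernB (p : ℝ≥0∞) : Measure Bool :=
  (PMF.bernoulli (min p 1).toNNReal
    (by simpa using ENNReal.toNNReal_mono ENNReal.one_ne_top (min_le_right p 1))).toMeasure

/-- The product Bernoulli measure of parameter `p` on `{0,1}^E`. -/
noncomputable def prodBern (E : Type*) [Fintype E] (p : ℝ≥0∞) : Measure (E → Bool) :=
  Measure.pi fun _ => bernB p

/-- A subset of `{0,1}^E` is increasing if it is preserved by coordinatewise increase. -/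
def IncreasingSet {E : Type*} (A : Set (E → Bool)) : Prop :=
  ∀ ω ω' : E → Bool, (∀ e, ω e ≤ ω' e) → ω ∈ A → ω' ∈ A

/-- An exploration of a finite set `E`: an adapted ordering of the coordinates.
The first queried coordinate is deterministic, and the `k`-th queried coordinate
depends only on the identities and values of the previously queried coordinates. -/
structure Exploration (E : Type*) [Fintype E] where
  order : (E → Bool) → Fin (Fintype.card E) → E
  bij : ∀ ω, Function.Bijective (order ω)
  adapted : ∀ ω ω' (k : Fin (Fintype.card E)),
    (∀ j, j < k → order ω j = order ω' j ∧ ω (order ω j) = ω' (order ω j)) →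
    order ω k = order ω' k

/-- `ExplEvent expl k e x` is the event `Expl_k(e,x)` that the exploration agrees with the
ordering `e` and the values `x` up to step `k`. -/
def ExplEvent {E : Type*} [Fintype E] (expl : Exploration E) (k : ℕ)
    (e : Fin (Fintype.card E) → E) (x : E → Bool) : Set (E → Bool) :=
  {ω | ∀ j : Fin (Fintype.card E), (j : ℕ) < k → expl.order ω j = e j ∧ ω (e j) = x (e j)}


/-! Backward induction along the exploration. For a history `(e, x)` of length `k`, compare
`μ[A | Expl_k(e, x)]` with the `q`-product measure of `A` when the queried coordinates are frozen
to `x`. After all `|E|` steps the history determines the configuration. From step `k + 1` back to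
step `k`, both sides split according to the value of the next queried coordinate `c`: the product
measure opens `c` with probability exactly `q`, `μ` with conditional probability at least `q`, and
as `A` is increasing, the branch with `c` open is the larger one on the product side. At `k = 0`
the comparison is the theorem. -/

open Function

section ProductMeasure

variable {ι : Type*} [Fintype ι] [DecidableEq ι] {X : ι → Type*} [∀ i, MeasurableSpace (X i)]
  {μ : ∀ i, Measure (X i)} [∀ i, IsProbabilityMeasure (μ i)]

theorem lintegral_pi_eq_lintegral_lintegral_update {f : (∀ i, X i) → ℝ≥0∞} (hf : Measurable f)
    (i : ι) :
    ∫⁻ x, f x ∂Measure.pi μ = ∫⁻ x, ∫⁻ y, f (update x i y) ∂μ i ∂Measure.pi μ := by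
  rw [← lmarginal_singleton]
  refine lintegral_eq_of_lmarginal_eq {i} hf (hf.lmarginal μ) ?_
  ext x
  simp_rw [lmarginal_singleton (∫⋯∫⁻_{i}, f ∂μ),
    lmarginal_update_of_mem μ (Finset.mem_singleton_self i), lintegral_const, measure_univ, mul_one]

end ProductMeasure

theorem ENNReal.convex_comb_mul_add_le {q a b s t : ℝ≥0∞} (hq : q ≤ 1) (hba : b ≤ a)
    (hs : q * (s + t) ≤ s) : (q * a + (1 - q) * b) * (s + t) ≤ a * s + b * t := by
  obtain ⟨d, rfl⟩ := exists_add_of_le hba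
  have hmix : q * (b + d) + (1 - q) * b = b + q * d := by
    rw [mul_add, add_right_comm, ← add_mul, add_tsub_cancel_of_le hq, one_mul]
  calc (q * (b + d) + (1 - q) * b) * (s + t) = b * s + b * t + d * (q * (s + t)) := by
        rw [hmix]; ring
    _ ≤ b * s + b * t + d * s := by gcongr
    _ = (b + d) * s + b * t := by ring

theorem IncreasingSet.setOf_piecewise_mem_subset {E : Type*} [DecidableEq E]
    {A : Set (E → Bool)} (hA : IncreasingSet A) (S : Finset E) {x y : E → Bool} (hxy : x ≤ y) :
    {ω | S.piecewise x ω ∈ A} ⊆ {ω | S.piecewise y ω ∈ A} :=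
  fun _ => hA _ _ (S.piecewise_le_piecewise hxy le_rfl)

instance (p : ℝ≥0∞) : IsProbabilityMeasure (bernB p) :=
  PMF.toMeasure.isProbabilityMeasure _

theorem lintegral_bernB {q : ℝ≥0∞} (hq : q ≤ 1) (f : Bool → ℝ≥0∞) :
    ∫⁻ b, f b ∂bernB q = q * f true + (1 - q) * f false := by
  have hq' : q ≠ ⊤ := ne_top_of_le_ne_top ENNReal.one_ne_top hq
  simp [lintegral_fintype, bernB, PMF.bernoulli_apply, min_eq_left hq, ENNReal.coe_sub,
    ENNReal.coe_toNNReal hq', mul_comm]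

section

variable {E : Type*} [Fintype E]

instance (p : ℝ≥0∞) : IsProbabilityMeasure (prodBern E p) := by
  unfold prodBern; infer_instance

namespace Exploration

variable (expl : Exploration E) {k : ℕ} {e : Fin (Fintype.card E) → E} {x ω ω' : E → Bool}

theorem explEvent_succ (κ : Fin (Fintype.card E)) :
    ExplEvent expl (κ + 1) e x
      = ExplEvent expl κ e x ∩ {ω | expl.order ω κ = e κ ∧ ω (e κ) = x (e κ)} := by
  ext ω
  simp only [ExplEvent, Set.mem_inter_iff, Set.mem_ofPred_eq, Nat.lt_succ_iff_lt_or_eq,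
    or_imp, forall_and, Fin.val_inj, forall_eq, and_and_and_comm]

theorem order_eq_of_mem_explEvent (hω : ω ∈ ExplEvent expl k e x)
    (hω' : ω' ∈ ExplEvent expl k e x) (κ : Fin (Fintype.card E)) (hκ : (κ : ℕ) ≤ k) :
    expl.order ω κ = expl.order ω' κ := by
  refine expl.adapted ω ω' κ fun j hj => ?_
  obtain ⟨horder, hval⟩ := hω j (Nat.lt_of_lt_of_le hj hκ)
  obtain ⟨horder', hval'⟩ := hω' j (Nat.lt_of_lt_of_le hj hκ)
  exact ⟨horder.trans horder'.symm, by rw [horder, hval, hval']⟩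

end Exploration

variable [DecidableEq E] {q : ℝ≥0∞}

theorem prodBern_eq_add_update (hq : q ≤ 1) (c : E) (B : Set (E → Bool)) :
    prodBern E q B = q * prodBern E q ((update · c true) ⁻¹' B)
      + (1 - q) * prodBern E q ((update · c false) ⁻¹' B) := by
  have hB : ∀ s : Set (E → Bool), prodBern E q s = ∫⁻ ω, s.indicator 1 ω ∂prodBern E q :=
    fun s => (lintegral_indicator_one MeasurableSet.of_discrete).symm
  rw [hB, prodBern, lintegral_pi_eq_lintegral_lintegral_update (measurable_of_finite _) c]
  simp_rw [lintegral_bernB hq]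
  rw [lintegral_add_left (by fun_prop), lintegral_const_mul _ (by fun_prop),
    lintegral_const_mul _ (by fun_prop), ← prodBern, hB, hB]
  rfl

theorem prodBern_piecewise_eq_add (hq : q ≤ 1) {S : Finset E} {c : E} (hc : c ∉ S)
    (x : E → Bool) (A : Set (E → Bool)) :
    prodBern E q {ω | S.piecewise x ω ∈ A}
      = q * prodBern E q {ω | (insert c S).piecewise (update x c true) ω ∈ A}
        + (1 - q) * prodBern E q {ω | (insert c S).piecewise (update x c false) ω ∈ A} := by
  have hupdate (b : Bool) (ω : E → Bool) :
      S.piecewise x (update ω c b) = (insert c S).piecewise (update x c b) ω := by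
    ext a
    by_cases hac : a = c
    · subst hac; simp [hc]
    · by_cases haS : a ∈ S <;> simp [hac, haS]
  rw [prodBern_eq_add_update hq c]
  simp only [Set.preimage_ofPred_eq, hupdate]

def queriedBefore (k : ℕ) (e : Fin (Fintype.card E) → E) : Finset E :=
  (Finset.univ.filter fun j : Fin (Fintype.card E) => (j : ℕ) < k).image e

theorem queriedBefore_zero (e : Fin (Fintype.card E) → E) : queriedBefore 0 e = ∅ := by
  simp [queriedBefore]

theorem queriedBefore_succ (e : Fin (Fintype.card E) → E) (κ : Fin (Fintype.card E)) :
    queriedBefore (κ + 1) e = insert (e κ) (queriedBefore κ e) := by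
  rw [queriedBefore, queriedBefore, ← Finset.image_insert]
  congr 1
  ext j
  simp only [Finset.mem_insert, Finset.mem_filter, Finset.mem_univ, true_and, Fin.ext_iff]
  omega

theorem queriedBefore_congr {k : ℕ} {e e' : Fin (Fintype.card E) → E}
    (h : ∀ j : Fin (Fintype.card E), (j : ℕ) < k → e j = e' j) :
    queriedBefore k e = queriedBefore k e' :=
  Finset.image_congr fun j hj => h j (by simpa using hj)

theorem apply_notMem_queriedBefore {e : Fin (Fintype.card E) → E} (he : Injective e)
    (κ : Fin (Fintype.card E)) : e κ ∉ queriedBefore κ e := by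
  simp [queriedBefore, he.eq_iff]

theorem queriedBefore_card {e : Fin (Fintype.card E) → E} (he : Surjective e) :
    queriedBefore (Fintype.card E) e = Finset.univ :=
  Finset.eq_univ_iff_forall.2 fun a => by simpa [queriedBefore] using he a

namespace Exploration

variable (expl : Exploration E) {k : ℕ} {e e' : Fin (Fintype.card E) → E} {x x' ω ω₀ : E → Bool}

theorem eqOn_of_mem_explEvent (hω : ω ∈ ExplEvent expl k e x) :
    Set.EqOn ω x (queriedBefore k e) := by
  intro a ha
  obtain ⟨j, hj, rfl⟩ := by simpa [queriedBefore] using ha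
  exact (hω j hj).2

theorem explEvent_congr (he : ∀ j : Fin (Fintype.card E), (j : ℕ) < k → e j = e' j)
    (hx : Set.EqOn x x' (queriedBefore k e)) :
    ExplEvent expl k e x = ExplEvent expl k e' x' := by
  ext ω
  refine forall₂_congr fun j hj => ?_
  have hmem : e j ∈ queriedBefore k e := Finset.mem_image_of_mem e (by simpa using hj)
  rw [← he j hj, hx hmem]

theorem explEvent_eq_order_of_mem (hω₀ : ω₀ ∈ ExplEvent expl k e x) :
    ExplEvent expl k e x = ExplEvent expl k (expl.order ω₀) ω₀ :=
  explEvent_congr expl (fun j hj => ((hω₀ j hj).1).symm) (expl.eqOn_of_mem_explEvent hω₀).symm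

theorem explEvent_succ_order_update (κ : Fin (Fintype.card E)) (hω₀ : ω₀ ∈ ExplEvent expl κ e x)
    (b : Bool) :
    ExplEvent expl (κ + 1) (expl.order ω₀) (update x (expl.order ω₀ κ) b)
      = ExplEvent expl κ e x ∩ {ω | ω (expl.order ω₀ κ) = b} := by
  have hc : expl.order ω₀ κ ∉ queriedBefore κ (expl.order ω₀) :=
    apply_notMem_queriedBefore (expl.bij ω₀).1 κ
  have hx : Set.EqOn (update x (expl.order ω₀ κ) b) x (queriedBefore κ (expl.order ω₀)) :=
    fun a ha => update_of_ne (ne_of_mem_of_not_mem ha hc) _ _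
  rw [explEvent_succ, update_self, explEvent_congr expl (fun j hj => (hω₀ j hj).1) hx]
  ext ω
  simp only [Set.mem_inter_iff, Set.mem_ofPred_eq, and_congr_right_iff]
  intro hω
  simp [expl.order_eq_of_mem_explEvent hω hω₀ κ le_rfl]

/-- For every history `(e, x)` of length `k`, the `q`-product measure of `A` with the queried
coordinates frozen to `x` is at most `μ[A | Expl_k(e, x)]`, multiplied through by
`μ (Expl_k(e, x))` so that null histories need no care. -/
def DominatedAt (q : ℝ≥0∞) (μ : Measure (E → Bool)) (A : Set (E → Bool)) (k : ℕ) : Prop :=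
  ∀ e x, prodBern E q {ω | (queriedBefore k e).piecewise x ω ∈ A} * μ (ExplEvent expl k e x)
    ≤ μ (A ∩ ExplEvent expl k e x)

theorem dominatedAt_card (q : ℝ≥0∞) (μ : Measure (E → Bool)) (A : Set (E → Bool)) :
    expl.DominatedAt q μ A (Fintype.card E) := by
  intro e x
  obtain hempty | ⟨ω₀, hω₀⟩ := (ExplEvent expl (Fintype.card E) e x).eq_empty_or_nonempty
  · simp [hempty]
  have he : e = expl.order ω₀ := funext fun j => ((hω₀ j j.isLt).1).symm
  have hall : queriedBefore (Fintype.card E) e = Finset.univ :=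
    queriedBefore_card (he ▸ (expl.bij ω₀).2)
  have hEx : ExplEvent expl (Fintype.card E) e x ⊆ {x} := fun ω hω =>
    Set.eqOn_univ _ _ |>.1 (by simpa [hall] using expl.eqOn_of_mem_explEvent hω)
  rw [hall]
  simp only [Finset.piecewise_univ]
  by_cases hxA : x ∈ A
  · simp only [hxA, Set.ofPred_true, measure_univ, one_mul]
    exact measure_mono fun ω hω => ⟨(hEx hω : ω = x) ▸ hxA, hω⟩
  · simp [hxA]

theorem dominatedAt_of_succ (hq : q ≤ 1) {μ : Measure (E → Bool)} [IsProbabilityMeasure μ]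
    (H : ∀ (k : Fin (Fintype.card E)) (e : Fin (Fintype.card E) → E) (x : E → Bool),
      μ (ExplEvent expl (Fintype.card E) e x) ≠ 0 →
      q ≤ μ[|ExplEvent expl k e x] {ω | ω (e k) = true})
    {A : Set (E → Bool)} (hA : IncreasingSet A) (κ : Fin (Fintype.card E))
    (ih : expl.DominatedAt q μ A (κ + 1)) : expl.DominatedAt q μ A κ := by
  intro e x
  set Ev := ExplEvent expl κ e x
  obtain hnull | hpos := eq_or_ne (μ Ev) 0
  · simp [hnull]
  obtain ⟨ω₀, hω₀, hatom⟩ : ∃ ω₀ ∈ Ev, μ {ω₀} ≠ 0 := by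
    simpa using (measure_null_iff_singleton (Set.to_countable Ev)).not.1 hpos
  set c := expl.order ω₀ κ
  have hqueried : queriedBefore κ (expl.order ω₀) = queriedBefore κ e :=
    queriedBefore_congr fun j hj => (hω₀ j hj).1
  have hc : c ∉ queriedBefore κ e := hqueried ▸ apply_notMem_queriedBefore (expl.bij ω₀).1 κ
  have hsplit (s : Set (E → Bool)) :
      μ s = μ (s ∩ {ω | ω c = true}) + μ (s ∩ {ω | ω c = false}) := by
    rw [← measure_inter_add_sdiff s (MeasurableSet.of_discrete (s := {ω | ω c = true}))]
    congr 2
    ext ω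
    simp
  -- `H` needs a full history of positive mass; that of the atom `ω₀` extends `(e, x)`.
  have hq_true : q * μ Ev ≤ μ (Ev ∩ {ω | ω c = true}) := by
    have hfull : μ (ExplEvent expl (Fintype.card E) (expl.order ω₀) ω₀) ≠ 0 := fun h =>
      hatom (measure_mono_null (Set.singleton_subset_iff.2 fun j _ => ⟨rfl, rfl⟩) h)
    calc q * μ Ev ≤ μ[|Ev] {ω | ω c = true} * μ Ev := by
          gcongr
          have hcond := H κ _ _ hfull
          rwa [← expl.explEvent_eq_order_of_mem hω₀] at hcond
      _ = μ (Ev ∩ {ω | ω c = true}) := cond_mul_eq_inter MeasurableSet.of_discrete _ _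
  have ih_of (b : Bool) :
      prodBern E q {ω | (insert c (queriedBefore κ e)).piecewise (update x c b) ω ∈ A}
          * μ (Ev ∩ {ω | ω c = b}) ≤ μ (A ∩ (Ev ∩ {ω | ω c = b})) := by
    have hnext := ih (expl.order ω₀) (update x c b)
    rwa [queriedBefore_succ, hqueried, expl.explEvent_succ_order_update κ hω₀] at hnext
  rw [prodBern_piecewise_eq_add hq hc, hsplit Ev, hsplit (A ∩ Ev)]
  simp only [Set.inter_assoc]
  calc _ ≤ _ := ENNReal.convex_comb_mul_add_le hq
          (measure_mono (hA.setOf_piecewise_mem_subset _ (update_mono (Bool.false_le _))))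
          (by rwa [← hsplit])
    _ ≤ _ := add_le_add (ih_of true) (ih_of false)

end Exploration

end

/-- If, along an exploration, every coordinate queried has conditional probability at least
`q` of being open given any history of positive probability, then the product Bernoulli
measure of parameter `q` is stochastically dominated by `μ`. -/
theorem exploration_stochastic_domination {E : Type*} [Fintype E]
    (q : ℝ≥0∞) (hq : q ≤ 1) (μ : Measure (E → Bool)) [IsProbabilityMeasure μ]
    (expl : Exploration E)
    (H : ∀ (k : Fin (Fintype.card E)) (e : Fin (Fintype.card E) → E) (x : E → Bool),
      μ (ExplEvent expl (Fintype.card E) e x) ≠ 0 →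
      q ≤ μ[|ExplEvent expl k e x] {ω | ω (e k) = true})
    (A : Set (E → Bool)) (hA : IncreasingSet A) :
    prodBern E q A ≤ μ A := by
  classical
  have hdom : expl.DominatedAt q μ A 0 :=
    Nat.decreasingInduction (motive := fun k _ => expl.DominatedAt q μ A k)
      (fun k hk => expl.dominatedAt_of_succ hq H hA ⟨k, hk⟩) (expl.dominatedAt_card q μ A)
      (Nat.zero_le _)
  have hstart := hdom (expl.order fun _ => false) fun _ => false
  have hEv : ExplEvent expl 0 (expl.order fun _ => false) (fun _ => false) = Set.univ := by
    ext; simp [ExplEvent]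
  rw [queriedBefore_zero, hEv] at hstart
  simpa using hstart
end

section
/- Let E be a finite set, p, ε ∈ [0,1], and set q = p(1−ε). Let (M, F, ρ) be a probability space and ν = μ_p ⊗ ρ on {0,1}^E × M, where μ_p is the product Bernoulli(p) measure. Fix an exploration of E and a measurable set A ⊆ {0,1}^E × M with ν[A] > 0. Suppose that for every k ∈ {0,…,|E|−1} and every exploration history (e,x) with ν[A ∩ Expl(e,x)] > 0, one has ν[e_{k+1} is pivotal for A | A ∩ Expl_k(e,x)] ≤ ε. Then the product Bernoulli(q) measure on {0,1}^E is stochastically dominated by the marginal on {0,1}^E of ν[· | A]. -/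
open MeasureTheory ProbabilityTheory
open scoped ENNReal

/-- A coordinate `a ∈ E` is pivotal for `A ⊆ {0,1}^E × M` at `(ω, η)` if flipping only the
coordinate `a` of `ω` (keeping `η` fixed) changes membership in `A`. -/
def Pivotal {E : Type*} [DecidableEq E] {M : Type*} (A : Set ((E → Bool) × M)) (a : E)
    (z : (E → Bool) × M) : Prop :=
  ¬ (((Function.update z.1 a (! z.1 a), z.2) ∈ A) ↔ z ∈ A)

/-! Reveal the coordinates of `ω` in the order chosen by the exploration. Flipping the next
coordinate `a` multiplies the `μ_p`-weight by `p / (1 - p)` and maps `A ∩ {ω a = 0}` into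
`A ∩ {ω a = 1}` except on configurations where `a` is pivotal; hence, given any history,
`ν[ω a = 1 | A, history] ≥ p - p ε = q`.

A backward induction over the exploration tree then proves
`μ_q[B | revealed bits] · ν[A ∩ history] ≤ ν[A ∩ history ∩ B]`: under `μ_q` the next bit is
`1` with probability exactly `q`, under `ν[· | A, history]` with probability at least `q`, and
since `B` is increasing the left-hand conditional probability is larger after revealing a `1`
than after revealing a `0`. At the root this is the domination. -/

instance inst_s1 (p : ℝ≥0∞) : IsProbabilityMeasure (bernB p) := by
  unfold bernB; infer_instance

instance (E : Type*) [Fintype E] (p : ℝ≥0∞) : IsProbabilityMeasure (prodBern E p) := by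
  unfold prodBern; infer_instance

lemma Finset.piecewise_insert_update {ι β : Type*} [DecidableEq ι] {s : Finset ι} {a : ι}
    (ha : a ∉ s) (f g : ι → β) {b : β} (hg : g a = b) :
    (insert a s).piecewise (Function.update f a b) g = s.piecewise f g := by
  ext i
  by_cases hi : i = a
  · subst hi
    simp [Finset.piecewise_eq_of_notMem _ _ _ ha, hg]
  · simp [Finset.piecewise, hi]

/-- The induction step over the exploration tree, with `G_b`, `T_b`, `F_b` the `μ_q`-measure of
the revealed section of `B`, the mass of the history and the mass of its part in `B` after the
next bit is revealed to be `b`. -/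
lemma ENNReal.mixture_mul_le {q G₀ G₁ T₀ T₁ F₀ F₁ : ℝ≥0∞} (hq : q ≤ 1)
    (hG : G₀ ≤ G₁) (hT : q * (T₁ + T₀) ≤ T₁) (h₁ : G₁ * T₁ ≤ F₁) (h₀ : G₀ * T₀ ≤ F₀) :
    (q * G₁ + (1 - q) * G₀) * (T₁ + T₀) ≤ F₁ + F₀ := by
  obtain ⟨δ, rfl⟩ := exists_add_of_le hG
  calc (q * (G₀ + δ) + (1 - q) * G₀) * (T₁ + T₀)
      = ((q + (1 - q)) * G₀ + q * δ) * (T₁ + T₀) := by ring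
    _ = G₀ * (T₁ + T₀) + δ * (q * (T₁ + T₀)) := by rw [add_tsub_cancel_of_le hq]; ring
    _ ≤ G₀ * (T₁ + T₀) + δ * T₁ := by gcongr
    _ = (G₀ + δ) * T₁ + G₀ * T₀ := by ring
    _ ≤ F₁ + F₀ := add_le_add h₁ h₀

lemma MeasureTheory.exists_mem_measure_singleton_ne_zero {α : Type*} [MeasurableSpace α]
    [Countable α] {μ : Measure α} {S : Set α} (h : μ S ≠ 0) : ∃ x ∈ S, μ {x} ≠ 0 := by
  by_contra! hS
  exact h (Set.biUnion_of_singleton S ▸ (measure_biUnion_null_iff S.to_countable).2 hS)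

lemma MeasureTheory.Measure.map_fst_restrict_apply {α β : Type*} [MeasurableSpace α]
    [MeasurableSpace β] (ν : Measure (α × β)) (A : Set (α × β)) {S : Set α}
    (hS : MeasurableSet S) : (ν.restrict A).map Prod.fst S = ν (A ∩ S ×ˢ Set.univ) := by
  rw [Measure.map_apply measurable_fst hS, Measure.restrict_apply (measurable_fst hS),
    Set.inter_comm, Set.prod_univ]

section Flip

variable {E : Type*} [DecidableEq E]

def flipAt (a : E) (x : E → Bool) : E → Bool := Function.update x a (!x a)

@[simp] lemma flipAt_apply_self (a : E) (x : E → Bool) : flipAt a x a = !x a :=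
  Function.update_self _ _ _

lemma flipAt_apply_of_ne {a i : E} (h : i ≠ a) (x : E → Bool) : flipAt a x i = x i :=
  Function.update_of_ne h _ _

lemma flipAt_involutive (a : E) : Function.Involutive (flipAt a) := fun x => by
  simp [flipAt]

lemma indicator_comp_flipAt {a : E} {S : Set (E → Bool)} (hS : flipAt a ⁻¹' S = S)
    (g : (E → Bool) → ℝ≥0∞) :
    S.indicator g ∘ flipAt a = S.indicator (g ∘ flipAt a) := by
  ext x
  rw [Function.comp_apply, ← Set.indicator_comp_right, hS]

end Flip

section Bernoulli

open Finset

variable {E : Type*} [Fintype E] {r : ℝ≥0∞}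

lemma measure_inter_true_add_false (μ : Measure (E → Bool)) (a : E) (S : Set (E → Bool)) :
    μ (S ∩ {x | x a = true}) + μ (S ∩ {x | x a = false}) = μ S := by
  convert measure_inter_add_sdiff S (MeasurableSet.of_discrete (s := {x : E → Bool | x a = true}))
    using 3
  ext x; simp

noncomputable def bernWeight (r : ℝ≥0∞) (x : E → Bool) : ℝ≥0∞ :=
  ∏ e, if x e then r else 1 - r

lemma prodBern_singleton (hr : r ≤ 1) (x : E → Bool) : prodBern E r {x} = bernWeight r x := by
  rw [prodBern, ← Set.univ_pi_singleton x, Measure.pi_pi, bernWeight]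
  refine prod_congr rfl fun e _ => ?_
  rw [bernB, PMF.toMeasure_apply_singleton _ _ (measurableSet_singleton _)]
  cases x e <;>
    simp [PMF.bernoulli_apply, min_eq_left hr,
      ENNReal.coe_toNNReal (ne_top_of_le_ne_top ENNReal.one_ne_top hr)]

variable [DecidableEq E]

lemma prodBern_apply (hr : r ≤ 1) (S : Set (E → Bool)) :
    prodBern E r S = ∑ x, bernWeight r x * S.indicator 1 x := by
  rw [← lintegral_indicator_one (MeasurableSet.of_discrete), lintegral_fintype]
  simp [prodBern_singleton hr, mul_comm]

lemma mul_bernWeight_flipAt (a : E) {x : E → Bool} (hx : x a = false) :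
    r * bernWeight r x = (1 - r) * bernWeight r (flipAt a x) := by
  have hrest : ∏ e ∈ univ.erase a, (if flipAt a x e then r else 1 - r)
      = ∏ e ∈ univ.erase a, (if x e then r else 1 - r) :=
    prod_congr rfl fun e he => by rw [flipAt_apply_of_ne (ne_of_mem_erase he)]
  simp only [bernWeight, ← mul_prod_erase univ _ (mem_univ a), hrest, flipAt_apply_self, hx]
  simp only [Bool.not_false, if_true, Bool.false_eq_true, if_false]
  ring

lemma mul_sum_indicator_flipAt (a : E) (h : (E → Bool) → ℝ≥0∞) :
    r * ∑ x, bernWeight r x * {x | x a = false}.indicator (h ∘ flipAt a) x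
      = (1 - r) * ∑ x, bernWeight r x * {x | x a = true}.indicator h x := by
  rw [mul_sum, mul_sum]
  refine Fintype.sum_equiv (flipAt_involutive a).toPerm _ _ fun x => ?_
  cases hx : x a
  · simp [Set.indicator, hx, ← mul_assoc, mul_bernWeight_flipAt a hx]
  · simp [Set.indicator, hx]

lemma prodBern_inter_eq (hr : r ≤ 1) {a : E} {C : Set (E → Bool)} (hC : flipAt a ⁻¹' C = C)
    (b : Bool) :
    prodBern E r (C ∩ {x | x a = b}) = (if b then r else 1 - r) * prodBern E r C := by
  have hX (b : Bool) : prodBern E r (C ∩ {x | x a = b})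
      = ∑ x, bernWeight r x * {x | x a = b}.indicator (C.indicator 1) x := by
    rw [prodBern_apply hr, Set.indicator_indicator, Set.inter_comm]
  have key := mul_sum_indicator_flipAt (r := r) a (C.indicator 1)
  rw [indicator_comp_flipAt hC, Pi.one_comp, ← hX, ← hX] at key
  rw [← measure_inter_true_add_false (prodBern E r) a C, mul_add]
  cases b
  · rw [if_neg Bool.false_ne_true, ← key, ← add_mul, add_tsub_cancel_of_le hr, one_mul]
  · rw [if_pos rfl, key, ← add_mul, add_tsub_cancel_of_le hr, one_mul]

end Bernoulli

namespace Exploration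

open Finset

variable {E : Type*} [Fintype E] (expl : Exploration E)

/-- `Expl_k(e, x)` for the history `(e, x)` that the exploration follows on `ω`; every nonempty
`Expl_k(e, x)` is of this form. -/
def history (k : ℕ) (ω : E → Bool) : Set (E → Bool) := ExplEvent expl k (expl.order ω) ω

variable {expl} {k : ℕ} {ω x : E → Bool}

lemma mem_history : x ∈ expl.history k ω ↔ ∀ j : Fin (Fintype.card E), (j : ℕ) < k →
    expl.order x j = expl.order ω j ∧ x (expl.order ω j) = ω (expl.order ω j) := Iff.rfl

lemma mem_history_self : ω ∈ expl.history k ω := fun _ _ => ⟨rfl, rfl⟩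

lemma order_eq_of_mem_history (hx : x ∈ expl.history k ω) {j : Fin (Fintype.card E)}
    (hj : (j : ℕ) ≤ k) : expl.order x j = expl.order ω j :=
  expl.adapted x ω j fun i hi => by
    obtain ⟨hord, hval⟩ := hx i (lt_of_lt_of_le hi hj)
    exact ⟨hord, hord ▸ hval⟩

lemma history_eq_of_mem (hx : x ∈ expl.history k ω) : expl.history k x = expl.history k ω := by
  ext y
  refine forall₂_congr fun j hj => ?_
  rw [(hx j hj).1, (hx j hj).2]

lemma history_succ (k : Fin (Fintype.card E)) (ω : E → Bool) :
    expl.history (k + 1) ω = expl.history k ω ∩ {x | x (expl.order ω k) = ω (expl.order ω k)} := by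
  ext x
  simp only [Set.mem_inter_iff, Set.mem_ofPred_eq, mem_history, Nat.lt_succ_iff_lt_or_eq]
  constructor
  · intro hx
    exact ⟨fun j hj => hx j (Or.inl hj), (hx k (Or.inr rfl)).2⟩
  · rintro ⟨hx, hk⟩ j (hj | hj)
    · exact hx j hj
    · obtain rfl : j = k := Fin.ext hj
      exact ⟨order_eq_of_mem_history hx le_rfl, hk⟩

lemma history_zero (ω : E → Bool) : expl.history 0 ω = Set.univ :=
  Set.eq_univ_of_forall fun _ _ hj => absurd hj (Nat.not_lt_zero _)

lemma history_card (ω : E → Bool) : expl.history (Fintype.card E) ω = {ω} := by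
  refine Set.eq_singleton_iff_unique_mem.2 ⟨mem_history_self, fun x hx => funext fun i => ?_⟩
  obtain ⟨j, rfl⟩ := (expl.bij ω).2 i
  exact (hx j j.2).2

variable [DecidableEq E]

variable (expl) in
def revealed (k : ℕ) (ω : E → Bool) : Finset E :=
  (univ.filter fun j : Fin (Fintype.card E) => (j : ℕ) < k).image (expl.order ω)

lemma mem_revealed {a : E} : a ∈ expl.revealed k ω ↔
    ∃ j : Fin (Fintype.card E), (j : ℕ) < k ∧ expl.order ω j = a := by
  simp [revealed]

lemma revealed_eq_of_mem (hx : x ∈ expl.history k ω) : expl.revealed k x = expl.revealed k ω :=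
  image_congr fun j hj => (hx j (by simpa using hj)).1

lemma order_notMem_revealed (k : Fin (Fintype.card E)) (ω : E → Bool) :
    expl.order ω k ∉ expl.revealed k ω := by
  rw [mem_revealed]
  rintro ⟨j, hj, hjk⟩
  exact hj.ne (congrArg Fin.val ((expl.bij ω).1 hjk))

lemma revealed_succ (k : Fin (Fintype.card E)) (ω : E → Bool) :
    expl.revealed (k + 1) ω = insert (expl.order ω k) (expl.revealed k ω) := by
  ext a
  simp only [mem_insert, mem_revealed, Nat.lt_succ_iff_lt_or_eq, or_and_right, exists_or,
    Fin.val_inj, exists_eq_left, eq_comm (a := a)]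
  exact or_comm

lemma update_mem_history {a : E} (ha : a ∉ expl.revealed k ω) (hx : x ∈ expl.history k ω)
    (b : Bool) : Function.update x a b ∈ expl.history k ω := by
  have hne : ∀ j : Fin (Fintype.card E), (j : ℕ) < k → expl.order ω j ≠ a :=
    fun j hj h => ha (mem_revealed.2 ⟨j, hj, h⟩)
  have horder : ∀ j : Fin (Fintype.card E), (j : ℕ) < k →
      expl.order (Function.update x a b) j = expl.order ω j := by
    intro j
    induction j using WellFoundedLT.induction with
    | _ j ih =>
      intro hj
      rw [← (hx j hj).1]
      refine expl.adapted _ x j fun i hi => ?_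
      have hik : (i : ℕ) < k := lt_trans hi hj
      rw [ih i hi hik, (hx i hik).1]
      exact ⟨rfl, Function.update_of_ne (hne i hik) _ _⟩
  intro j hj
  exact ⟨horder j hj, by rw [Function.update_of_ne (hne j hj), (hx j hj).2]⟩

lemma revealed_zero (ω : E → Bool) : expl.revealed 0 ω = ∅ := by
  simp [revealed]

lemma revealed_card (ω : E → Bool) : expl.revealed (Fintype.card E) ω = univ :=
  eq_univ_of_forall fun i => by
    obtain ⟨j, rfl⟩ := (expl.bij ω).2 i
    exact mem_revealed.2 ⟨j, j.2, rfl⟩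

lemma preimage_flipAt_history (k : Fin (Fintype.card E)) (ω : E → Bool) :
    flipAt (expl.order ω k) ⁻¹' expl.history k ω = expl.history k ω := by
  have hflip (x : E → Bool) (hx : x ∈ expl.history k ω) :
      flipAt (expl.order ω k) x ∈ expl.history k ω :=
    update_mem_history (order_notMem_revealed k ω) hx _
  ext x
  exact ⟨fun hx => flipAt_involutive _ x ▸ hflip _ hx, hflip x⟩

lemma history_succ_update (k : Fin (Fintype.card E)) (ω : E → Bool) (b : Bool) :
    expl.history (k + 1) (Function.update ω (expl.order ω k) b)
      = expl.history k ω ∩ {x | x (expl.order ω k) = b} := by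
  have hmem := update_mem_history (order_notMem_revealed (expl := expl) k ω)
    (mem_history_self (k := k)) b
  rw [history_succ, history_eq_of_mem hmem, order_eq_of_mem_history hmem le_rfl,
    Function.update_self]

lemma revealed_succ_update (k : Fin (Fintype.card E)) (ω : E → Bool) (b : Bool) :
    expl.revealed (k + 1) (Function.update ω (expl.order ω k) b)
      = insert (expl.order ω k) (expl.revealed k ω) := by
  have hmem := update_mem_history (order_notMem_revealed (expl := expl) k ω)
    (mem_history_self (k := k)) b
  rw [revealed_succ, revealed_eq_of_mem hmem, order_eq_of_mem_history hmem le_rfl]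

variable (expl) in
/-- `B` with the coordinates revealed in the first `k` steps of exploring `ω` frozen to their
values in `ω`; its `μ_q`-measure is the `μ_q`-probability of `B` given these values. -/
def revealedSection (B : Set (E → Bool)) (k : ℕ) (ω : E → Bool) : Set (E → Bool) :=
  {y | (expl.revealed k ω).piecewise ω y ∈ B}

variable {B : Set (E → Bool)}

lemma revealedSection_inter_eq (k : Fin (Fintype.card E)) (ω : E → Bool) (b : Bool) :
    expl.revealedSection B k ω ∩ {y | y (expl.order ω k) = b}
      = expl.revealedSection B (k + 1) (Function.update ω (expl.order ω k) b)
        ∩ {y | y (expl.order ω k) = b} := by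
  ext y
  simp only [revealedSection, Set.mem_inter_iff, Set.mem_ofPred_eq, and_congr_left_iff]
  intro hy
  rw [revealed_succ_update, Finset.piecewise_insert_update (order_notMem_revealed k ω) _ _ hy]

lemma preimage_flipAt_revealedSection {k : ℕ} {ω : E → Bool} {a : E}
    (ha : a ∈ expl.revealed k ω) :
    flipAt a ⁻¹' expl.revealedSection B k ω = expl.revealedSection B k ω := by
  ext y
  simp only [revealedSection, Set.mem_preimage, Set.mem_ofPred_eq]
  rw [(expl.revealed k ω).piecewise_congr (fun _ _ => rfl) fun i hi =>
    flipAt_apply_of_ne (fun h => hi (by rwa [h])) y]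

lemma revealedSection_update_false_subset (hB : IncreasingSet B) (k : Fin (Fintype.card E))
    (ω : E → Bool) :
    expl.revealedSection B (k + 1) (Function.update ω (expl.order ω k) false)
      ⊆ expl.revealedSection B (k + 1) (Function.update ω (expl.order ω k) true) := by
  intro y hy
  simp only [revealedSection, Set.mem_ofPred_eq] at hy ⊢
  rw [revealed_succ_update] at hy ⊢
  refine hB _ _ (Finset.piecewise_le_piecewise _ ?_ le_rfl) hy
  intro i
  by_cases hi : i = expl.order ω k
  · subst hi; simp
  · simp [Function.update_of_ne hi]

variable {q : ℝ≥0∞}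

lemma prodBern_revealedSection (hq : q ≤ 1) (k : Fin (Fintype.card E)) (ω : E → Bool) :
    prodBern E q (expl.revealedSection B k ω)
      = q * prodBern E q
          (expl.revealedSection B (k + 1) (Function.update ω (expl.order ω k) true))
        + (1 - q) * prodBern E q
          (expl.revealedSection B (k + 1) (Function.update ω (expl.order ω k) false)) := by
  have hinv (b : Bool) := preimage_flipAt_revealedSection (B := B)
    (show expl.order ω k ∈ expl.revealed (k + 1) (Function.update ω (expl.order ω k) b) by
      rw [revealed_succ_update]; exact mem_insert_self _ _)
  rw [← measure_inter_true_add_false _ (expl.order ω k) (expl.revealedSection B k ω),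
    revealedSection_inter_eq, revealedSection_inter_eq, prodBern_inter_eq hq (hinv true),
    prodBern_inter_eq hq (hinv false)]
  rfl

variable {μ : Measure (E → Bool)}

lemma revealedSection_zero (ω : E → Bool) : expl.revealedSection B 0 ω = B := by
  ext y
  rw [revealedSection, Set.mem_ofPred_eq, revealed_zero, Finset.piecewise_empty]

lemma revealedSection_card (ω : E → Bool) :
    expl.revealedSection B (Fintype.card E) ω = {_y | ω ∈ B} := by
  ext y
  rw [revealedSection, Set.mem_ofPred_eq, revealed_card, Finset.piecewise_univ]
  rfl

lemma prodBern_revealedSection_mul_le_card (ω : E → Bool) :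
    prodBern E q (expl.revealedSection B (Fintype.card E) ω)
        * μ (expl.history (Fintype.card E) ω)
      ≤ μ (expl.history (Fintype.card E) ω ∩ B) := by
  rw [history_card]
  by_cases hω : ω ∈ B
  · rw [Set.singleton_inter_of_mem hω]
    exact mul_le_of_le_one_left zero_le prob_le_one
  · simp [revealedSection_card, hω]

lemma prodBern_revealedSection_mul_le_succ (hq : q ≤ 1) (hB : IncreasingSet B)
    (k : Fin (Fintype.card E)) (ω : E → Bool)
    (hbias : q * μ (expl.history k ω)
      ≤ μ (expl.history k ω ∩ {x | x (expl.order ω k) = true}))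
    (ih : ∀ ω', prodBern E q (expl.revealedSection B (k + 1) ω') * μ (expl.history (k + 1) ω')
      ≤ μ (expl.history (k + 1) ω' ∩ B)) :
    prodBern E q (expl.revealedSection B k ω) * μ (expl.history k ω)
      ≤ μ (expl.history k ω ∩ B) := by
  have ih' (b : Bool) := history_succ_update k ω b ▸ ih (Function.update ω (expl.order ω k) b)
  rw [← measure_inter_true_add_false μ (expl.order ω k) (expl.history k ω)] at hbias ⊢
  rw [prodBern_revealedSection hq,
    ← measure_inter_true_add_false μ (expl.order ω k) (expl.history k ω ∩ B),
    Set.inter_right_comm _ B, Set.inter_right_comm _ B]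
  exact ENNReal.mixture_mul_le hq (measure_mono (revealedSection_update_false_subset hB k ω)) hbias
    (ih' true) (ih' false)

theorem prodBern_mul_le_of_bias (hq : q ≤ 1) (hB : IncreasingSet B)
    (hbias : ∀ (k : Fin (Fintype.card E)) (ω : E → Bool),
      q * μ (expl.history k ω) ≤ μ (expl.history k ω ∩ {x | x (expl.order ω k) = true})) :
    prodBern E q B * μ Set.univ ≤ μ B := by
  have hclaim : ∀ k ≤ Fintype.card E, ∀ ω, prodBern E q (expl.revealedSection B k ω)
      * μ (expl.history k ω) ≤ μ (expl.history k ω ∩ B) := fun k hk =>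
    Nat.decreasingInduction
      (fun k hk ih ω => prodBern_revealedSection_mul_le_succ hq hB ⟨k, hk⟩ ω (hbias _ ω) ih)
      prodBern_revealedSection_mul_le_card hk
  simpa [history_zero, revealedSection_zero] using hclaim 0 (Nat.zero_le _) fun _ => true

end Exploration

section Pivotal

open Finset

variable {E : Type*} [Fintype E] [DecidableEq E] {M : Type*} [MeasurableSpace M]
  (ρ : Measure M) {p : ℝ≥0∞}

lemma prodBern_prod_inter_apply [SFinite ρ] (hp : p ≤ 1) {D : Set ((E → Bool) × M)}
    (hD : MeasurableSet D) (S : Set (E → Bool)) :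
    ((prodBern E p).prod ρ) (D ∩ S ×ˢ Set.univ)
      = ∑ x, bernWeight p x * S.indicator (fun x => ρ (Prod.mk x ⁻¹' D)) x := by
  rw [Measure.prod_apply (hD.inter (MeasurableSet.of_discrete.prod .univ)), lintegral_fintype]
  refine sum_congr rfl fun x _ => ?_
  rw [prodBern_singleton hp, mul_comm, Set.preimage_inter]
  by_cases hx : x ∈ S <;> simp [hx]

lemma measurable_flipAt_fst (a : E) : Measurable fun z : (E → Bool) × M => (flipAt a z.1, z.2) :=
  ((Measurable.of_discrete (f := flipAt a)).comp measurable_fst).prodMk measurable_snd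

lemma mul_prodBern_prod_flipAt_preimage [SFinite ρ] (hp : p ≤ 1) {D : Set ((E → Bool) × M)}
    (hD : MeasurableSet D) {a : E} {S : Set (E → Bool)} (hS : flipAt a ⁻¹' S = S) :
    p * ((prodBern E p).prod ρ)
        ({z | (flipAt a z.1, z.2) ∈ D} ∩ (S ∩ {x | x a = false}) ×ˢ Set.univ)
      = (1 - p) * ((prodBern E p).prod ρ) (D ∩ (S ∩ {x | x a = true}) ×ˢ Set.univ) := by
  rw [prodBern_prod_inter_apply ρ hp (D := {z | (flipAt a z.1, z.2) ∈ D})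
      (measurable_flipAt_fst a hD),
    prodBern_prod_inter_apply ρ hp hD, Set.inter_comm S, Set.inter_comm S,
    ← Set.indicator_indicator, ← Set.indicator_indicator]
  convert mul_sum_indicator_flipAt a (S.indicator fun x => ρ (Prod.mk x ⁻¹' D)) using 5
  rw [indicator_comp_flipAt hS]
  rfl

lemma mul_le_add_pivotal [SFinite ρ] (hp : p ≤ 1) {A : Set ((E → Bool) × M)}
    (hA : MeasurableSet A) {a : E} {S : Set (E → Bool)} (hS : flipAt a ⁻¹' S = S) :
    p * ((prodBern E p).prod ρ) (A ∩ S ×ˢ Set.univ)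
      ≤ ((prodBern E p).prod ρ) (A ∩ (S ∩ {x | x a = true}) ×ˢ Set.univ)
        + p * ((prodBern E p).prod ρ) (A ∩ S ×ˢ Set.univ ∩ {z | Pivotal A a z}) := by
  set ν := (prodBern E p).prod ρ
  have hsplit := measure_inter_true_add_false ((ν.restrict A).map Prod.fst) a S
  simp only [Measure.map_fst_restrict_apply ν A MeasurableSet.of_discrete] at hsplit
  have hcover : A ∩ (S ∩ {x | x a = false}) ×ˢ Set.univ
      ⊆ {z | (flipAt a z.1, z.2) ∈ A} ∩ (S ∩ {x | x a = false}) ×ˢ Set.univ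
        ∪ A ∩ S ×ˢ Set.univ ∩ {z | Pivotal A a z} := by
    rintro z ⟨hzA, hzS, -⟩
    by_cases hflip : (flipAt a z.1, z.2) ∈ A
    · exact Or.inl ⟨hflip, hzS, trivial⟩
    · exact Or.inr ⟨⟨hzA, hzS.1, trivial⟩, fun h => hflip (h.2 hzA)⟩
  calc p * ν (A ∩ S ×ˢ Set.univ)
      = p * ν (A ∩ (S ∩ {x | x a = true}) ×ˢ Set.univ)
        + p * ν (A ∩ (S ∩ {x | x a = false}) ×ˢ Set.univ) := by rw [← hsplit, mul_add]
    _ ≤ p * ν (A ∩ (S ∩ {x | x a = true}) ×ˢ Set.univ)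
        + (p * ν ({z | (flipAt a z.1, z.2) ∈ A} ∩ (S ∩ {x | x a = false}) ×ˢ Set.univ)
          + p * ν (A ∩ S ×ˢ Set.univ ∩ {z | Pivotal A a z})) := by
      gcongr p * _ + ?_
      rw [← mul_add]
      gcongr
      exact (measure_mono hcover).trans (measure_union_le _ _)
    _ = ν (A ∩ (S ∩ {x | x a = true}) ×ˢ Set.univ)
        + p * ν (A ∩ S ×ˢ Set.univ ∩ {z | Pivotal A a z}) := by
      rw [mul_prodBern_prod_flipAt_preimage ρ hp hA hS, ← add_assoc, ← add_mul,
        add_tsub_cancel_of_le hp, one_mul]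

lemma mul_le_of_cond_pivotal_le [IsFiniteMeasure ρ] (hp : p ≤ 1) {ε q : ℝ≥0∞}
    (hε : ε ≤ 1) (hq : q = p * (1 - ε)) {A : Set ((E → Bool) × M)} (hA : MeasurableSet A) {a : E}
    {S : Set (E → Bool)} (hS : flipAt a ⁻¹' S = S)
    (hpiv : ((prodBern E p).prod ρ)[|A ∩ S ×ˢ Set.univ] {z | Pivotal A a z} ≤ ε) :
    q * ((prodBern E p).prod ρ) (A ∩ S ×ˢ Set.univ)
      ≤ ((prodBern E p).prod ρ) (A ∩ (S ∩ {x | x a = true}) ×ˢ Set.univ) := by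
  set ν := (prodBern E p).prod ρ
  set X := ν (A ∩ S ×ˢ Set.univ)
  rcases eq_or_ne X 0 with hX | hX
  · simp [hX]
  have hP : ν (A ∩ S ×ˢ Set.univ ∩ {z | Pivotal A a z}) ≤ X * ε := by
    rwa [cond_apply (hA.inter (MeasurableSet.of_discrete.prod .univ)),
      ENNReal.inv_mul_le_iff hX (measure_ne_top _ _)] at hpiv
  have hfin : p * (ε * X) ≠ ∞ :=
    ENNReal.mul_ne_top (ne_top_of_le_ne_top ENNReal.one_ne_top hp)
      (ENNReal.mul_ne_top (ne_top_of_le_ne_top ENNReal.one_ne_top hε) (measure_ne_top _ _))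
  refine ENNReal.le_of_add_le_add_right hfin ?_
  calc q * X + p * (ε * X) = p * X := by
        rw [hq, mul_assoc, ← mul_add, ← add_mul, tsub_add_cancel_of_le hε, one_mul]
    _ ≤ ν (A ∩ (S ∩ {x | x a = true}) ×ˢ Set.univ)
          + p * ν (A ∩ S ×ˢ Set.univ ∩ {z | Pivotal A a z}) :=
      mul_le_add_pivotal ρ hp hA hS
    _ ≤ ν (A ∩ (S ∩ {x | x a = true}) ×ˢ Set.univ) + p * (ε * X) := by
      rw [mul_comm ε]; gcongr

end Pivotal

/-- If conditionally on `A` and on any exploration history compatible with `A`, the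
probability that the next queried coordinate is pivotal for `A` is at most `ε`, then the
product Bernoulli measure of parameter `q = p(1-ε)` is stochastically dominated by the
marginal on `{0,1}^E` of `ν[·|A]`, where `ν = μ_p ⊗ ρ`. -/
theorem exploration_pivotal_domination {E : Type*} [Fintype E] [DecidableEq E]
    {M : Type*} [MeasurableSpace M]
    (p ε : ℝ≥0∞) (hp : p ≤ 1) (hε : ε ≤ 1) (q : ℝ≥0∞) (hq : q = p * (1 - ε))
    (ρ : Measure M) [IsProbabilityMeasure ρ]
    (ν : Measure ((E → Bool) × M)) (hν : ν = (prodBern E p).prod ρ)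
    (expl : Exploration E)
    (A : Set ((E → Bool) × M)) (hAmeas : MeasurableSet A) (hApos : ν A ≠ 0)
    (H : ∀ (k : Fin (Fintype.card E)) (e : Fin (Fintype.card E) → E) (x : E → Bool),
      ν (A ∩ (ExplEvent expl (Fintype.card E) e x) ×ˢ Set.univ) ≠ 0 →
      ν[|A ∩ (ExplEvent expl (k : ℕ) e x) ×ˢ Set.univ] {z | Pivotal A (e k) z} ≤ ε)
    (B : Set (E → Bool)) (hB : IncreasingSet B) :
    prodBern E q B ≤ (ν[|A]).map Prod.fst B := by
  subst hν
  set ν := (prodBern E p).prod ρ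
  set μ := (ν.restrict A).map Prod.fst
  have hμ (S : Set (E → Bool)) : μ S = ν (A ∩ S ×ˢ Set.univ) :=
    Measure.map_fst_restrict_apply ν A .of_discrete
  have hbias (k : Fin (Fintype.card E)) (ω : E → Bool) :
      q * μ (expl.history k ω)
        ≤ μ (expl.history k ω ∩ {x | x (expl.order ω k) = true}) := by
    rcases eq_or_ne (μ (expl.history k ω)) 0 with h0 | h0
    · simp [h0]
    obtain ⟨ω', hω', hne⟩ := exists_mem_measure_singleton_ne_zero h0
    have hpiv :
        ν[|A ∩ expl.history k ω' ×ˢ Set.univ] {z | Pivotal A (expl.order ω' k) z} ≤ ε :=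
      H k (expl.order ω') ω' (by rwa [← expl.history_card ω', hμ] at hne)
    rw [Exploration.history_eq_of_mem hω',
      Exploration.order_eq_of_mem_history hω' le_rfl] at hpiv
    rw [hμ, hμ]
    exact mul_le_of_cond_pivotal_le ρ hp hε hq hAmeas (expl.preimage_flipAt_history k ω) hpiv
  have hμuniv : μ Set.univ = ν A := by rw [hμ, Set.univ_prod_univ, Set.inter_univ]
  rw [ProbabilityTheory.cond, Measure.map_smul, Measure.smul_apply, smul_eq_mul,
    ← ENNReal.mul_le_iff_le_inv hApos (measure_ne_top _ _), mul_comm, ← hμuniv]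
  exact expl.prodBern_mul_le_of_bias (hq ▸ mul_le_one' hp tsub_le_self) hB hbias
end

section
/- Assume the near-critical inequality: for all p ∈ [0,1] and h > 0, with q = p(1 − m_h(p)), one has ψ_n(q) ≤ ψ_n(p) e^{−hn}/(1 − m_h(p)) for all n ≥ 0. Then for every p < p_c there exist constants C > 0 and c > 0 such that ψ_n(p) ≤ C e^{−cn} for all n ≥ 0, i.e. the cluster volume has an exponential tail throughout the subcritical phase. -/
open MeasureTheory ProbabilityTheory Filter
open scoped ENNReal

/-- The subgraph of open edges of `H` in the configuration `ω`. -/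
def openSub {V : Type*} (H : SimpleGraph V) (ω : Sym2 V → Bool) : SimpleGraph V where
  Adj a b := H.Adj a b ∧ ω s(a, b) = true
  symm := by
    constructor
    intro a b h
    refine ⟨h.1.symm, ?_⟩
    rw [Sym2.eq_swap]; exact h.2
  loopless := ⟨fun a h => H.irrefl h.1⟩

/-- The open cluster `C_o` of the vertex `o` in the configuration `ω`. -/
def cluster {V : Type*} (H : SimpleGraph V) (o : V) (ω : Sym2 V → Bool) : Set V :=
  {v | (openSub H ω).Reachable o v}

/-- The open cluster of `o` contains at least `n` vertices (`|C_o| ≥ n`). -/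
def clusterAtLeast {V : Type*} (H : SimpleGraph V) (o : V) (n : ℕ) (ω : Sym2 V → Bool) : Prop :=
  ∃ s : Finset V, ↑s ⊆ cluster H o ω ∧ n ≤ s.card

/-- `μ` is the Bernoulli product measure of parameter `p` on `{0,1}^ι`, characterized by
being a probability measure giving the correct product probabilities to all cylinders. -/
def IsBernoulliProduct {ι : Type*} (p : ℝ) (μ : Measure (ι → Bool)) : Prop :=
  IsProbabilityMeasure μ ∧
    ∀ (s : Finset ι) (x : ι → Bool),
      μ {ω | ∀ i ∈ s, ω i = x i} =
        ∏ i ∈ s, (if x i then ENNReal.ofReal p else ENNReal.ofReal (1 - p))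

/-- The magnetization: the probability that the cluster of `o` contains a green vertex. -/
noncomputable def mag {V : Type*} (H : SimpleGraph V) (o : V)
    (μe : Measure (Sym2 V → Bool)) (γv : Measure (V → Bool)) : ℝ :=
  ((μe.prod γv) {z | ∃ v ∈ cluster H o z.1, z.2 v = true}).toReal

/-- `ψ_n`: the probability that the cluster of `o` has at least `n` vertices. -/
noncomputable def psiVol {V : Type*} (H : SimpleGraph V) (o : V) (n : ℕ)
    (μe : Measure (Sym2 V → Bool)) : ℝ :=
  (μe {ω | clusterAtLeast H o n ω}).toReal

/-- `θ(p)`: the probability that the cluster of `o` is infinite. -/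
noncomputable def theta {V : Type*} (H : SimpleGraph V) (o : V)
    (μe : Measure (Sym2 V → Bool)) : ℝ :=
  (μe {ω | (cluster H o ω).Infinite}).toReal

/-- The critical parameter `p_c = inf {p ∈ [0,1] : μ_p[|C_o| = ∞] > 0}`. -/
noncomputable def pCrit {V : Type*} (H : SimpleGraph V) (o : V)
    (μ : ℝ → Measure (Sym2 V → Bool)) : ℝ :=
  sInf {p | p ∈ Set.Icc (0:ℝ) 1 ∧ 0 < theta H o (μ p)}

/-!
Couple the percolation parameters by taking the coordinatewise AND of independent
configurations: this shows that `ψ_n` is monotone in `p`, since `{|C_o| ≥ n}` is an increasing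
event. A cluster with fewer than `N` vertices meets a green vertex with probability at most
`1 - e^{-hN} ≤ h N`, so `m_h(p') ≤ ψ_N(p') + h N`; as `ψ_N(p') → θ(p') = 0` for `p' < p_c`, this
gives `m_h(p') → 0` as `h → 0`. Taking `p < p' < p_c` and `h` so small that
`q = p' (1 - m_h(p')) ≥ p`, the near-critical inequality yields
`ψ_n(p) ≤ ψ_n(q) ≤ e^{-hn} / (1 - m_h(p'))`.
-/

open Set Topology

section Bernoulli

variable {ι : Type*}

lemma measurableSet_setOf_forall_eq (s : Finset ι) (b : Bool) :
    MeasurableSet {ω : ι → Bool | ∀ i ∈ s, ω i = b} := by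
  simp only [ofPred_forall]
  exact Finset.measurableSet_biInter s fun i _ => measurableSet_eq_fun (measurable_pi_apply i)
    measurable_const

lemma isPiSystem_range_setOf_forall_eq_true :
    IsPiSystem (range fun s : Finset ι => {ω : ι → Bool | ∀ i ∈ s, ω i = true}) := by
  classical
  rintro _ ⟨s, rfl⟩ _ ⟨t, rfl⟩ -
  exact ⟨s ∪ t, by ext ω; simp [or_imp, forall_and]⟩

lemma pi_eq_generateFrom_setOf_forall_eq_true :
    (MeasurableSpace.pi : MeasurableSpace (ι → Bool)) =
      MeasurableSpace.generateFrom
        (range fun s : Finset ι => {ω : ι → Bool | ∀ i ∈ s, ω i = true}) := by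
  refine le_antisymm (iSup_le fun i => Measurable.comap_le ?_)
    (MeasurableSpace.generateFrom_le ?_)
  · have hi : MeasurableSet[MeasurableSpace.generateFrom
        (range fun s : Finset ι => {ω : ι → Bool | ∀ i ∈ s, ω i = true})]
        {ω : ι → Bool | ω i = true} :=
      MeasurableSpace.measurableSet_generateFrom ⟨{i}, by simp⟩
    refine @measurable_to_countable' Bool (ι → Bool) _ _ (MeasurableSpace.generateFrom _) _
      fun b => ?_
    cases b
    · have hfalse : (fun ω : ι → Bool => ω i) ⁻¹' {false} = {ω | ω i = true}ᶜ := by ext; simp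
      exact hfalse ▸ hi.compl
    · exact hi
  · rintro _ ⟨s, rfl⟩
    exact measurableSet_setOf_forall_eq s true

lemma ext_of_measure_setOf_forall_eq_true {μ ν : Measure (ι → Bool)} [IsFiniteMeasure μ]
    (h : ∀ s : Finset ι,
      μ {ω | ∀ i ∈ s, ω i = true} = ν {ω | ∀ i ∈ s, ω i = true}) : μ = ν :=
  ext_of_generate_finite _ pi_eq_generateFrom_setOf_forall_eq_true
    isPiSystem_range_setOf_forall_eq_true (by rintro _ ⟨s, rfl⟩; exact h s)
    (by simpa using h ∅)

namespace IsBernoulliProduct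

variable {p : ℝ} {μ : Measure (ι → Bool)}

lemma measure_setOf_forall_eq (hμ : IsBernoulliProduct p μ) (s : Finset ι) (b : Bool) :
    μ {ω | ∀ i ∈ s, ω i = b} =
      (if b then ENNReal.ofReal p else ENNReal.ofReal (1 - p)) ^ s.card := by
  simpa using hμ.2 s fun _ => b

lemma map_and {a b r : ℝ} {μa μb μr : Measure (ι → Bool)} (hb : 0 ≤ b) (hab : a = b * r)
    (hA : IsBernoulliProduct a μa) (hB : IsBernoulliProduct b μb)
    (hR : IsBernoulliProduct r μr) :
    (μb.prod μr).map (fun z i => z.1 i && z.2 i) = μa := by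
  have := hA.1; have := hB.1; have := hR.1
  have hand : Measurable fun z : (ι → Bool) × (ι → Bool) => fun i => z.1 i && z.2 i := by
    fun_prop
  refine (ext_of_measure_setOf_forall_eq_true fun s => ?_).symm
  have hpre : (fun z : (ι → Bool) × (ι → Bool) => fun i => z.1 i && z.2 i) ⁻¹'
      {ω | ∀ i ∈ s, ω i = true} =
      {ω | ∀ i ∈ s, ω i = true} ×ˢ {ω | ∀ i ∈ s, ω i = true} := by
    ext z; simp [forall_and]
  rw [Measure.map_apply hand (measurableSet_setOf_forall_eq s true), hpre, Measure.prod_prod,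
    hA.measure_setOf_forall_eq, hB.measure_setOf_forall_eq, hR.measure_setOf_forall_eq]
  simp [hab, ENNReal.ofReal_mul hb, mul_pow]

lemma measure_le_of_isUpperSet {a b r : ℝ} {μa μb μr : Measure (ι → Bool)} (hb : 0 ≤ b)
    (hab : a = b * r) (hA : IsBernoulliProduct a μa) (hB : IsBernoulliProduct b μb)
    (hR : IsBernoulliProduct r μr) {E : Set (ι → Bool)} (hE : MeasurableSet E)
    (hup : IsUpperSet E) : μa E ≤ μb E := by
  have := hR.1
  calc μa E = (μb.prod μr) ((fun z i => z.1 i && z.2 i) ⁻¹' E) := by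
        rw [← hA.map_and hb hab hB hR, Measure.map_apply (by fun_prop) hE]
    _ ≤ (μb.prod μr) (E ×ˢ univ) :=
        measure_mono fun z hz => ⟨hup (fun i => Bool.and_le_left _ _) hz, trivial⟩
    _ = μb E := by rw [Measure.prod_prod, measure_univ, mul_one]

lemma measure_setOf_exists_eq_true_le {h : ℝ} (hμ : IsBernoulliProduct (1 - Real.exp (-h)) μ)
    (s : Finset ι) : μ {ω | ∃ i ∈ s, ω i = true} ≤ ENNReal.ofReal (h * s.card) := by
  have := hμ.1
  have hcompl : {ω : ι → Bool | ∃ i ∈ s, ω i = true} = {ω | ∀ i ∈ s, ω i = false}ᶜ := by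
    ext ω; simp
  rw [hcompl, prob_compl_eq_one_sub (measurableSet_setOf_forall_eq s false),
    hμ.measure_setOf_forall_eq, if_neg Bool.false_ne_true, sub_sub_cancel,
    ← ENNReal.ofReal_pow (Real.exp_nonneg _), ← Real.exp_nat_mul, tsub_le_iff_right]
  calc (1 : ℝ≥0∞) = ENNReal.ofReal 1 := ENNReal.ofReal_one.symm
    _ ≤ ENNReal.ofReal (h * s.card + Real.exp (s.card * -h)) :=
        ENNReal.ofReal_le_ofReal (by linarith [Real.add_one_le_exp (s.card * -h)])
    _ ≤ _ := ENNReal.ofReal_add_le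

end IsBernoulliProduct

end Bernoulli

lemma measure_prod_le_add {α β : Type*} [MeasurableSpace α] [MeasurableSpace β]
    {μ : Measure α} {ν : Measure β} [IsProbabilityMeasure μ] [IsProbabilityMeasure ν]
    {E : Set (α × β)} {A : Set α} (hE : MeasurableSet E) (hA : MeasurableSet A) {c : ℝ≥0∞}
    (hc : ∀ x ∉ A, ν (Prod.mk x ⁻¹' E) ≤ c) : (μ.prod ν) E ≤ μ A + c := by
  rw [Measure.prod_apply hE]
  calc ∫⁻ x, ν (Prod.mk x ⁻¹' E) ∂μ ≤ ∫⁻ x, A.indicator 1 x + c ∂μ := by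
        refine lintegral_mono fun x => ?_
        by_cases hx : x ∈ A
        · simpa [hx] using prob_le_one.trans le_self_add
        · simpa [hx] using hc x hx
    _ = μ A + c := by
        rw [lintegral_add_right _ measurable_const, lintegral_indicator_one hA, lintegral_const,
          measure_univ, mul_one]

section Graph

variable {V : Type*} (H : SimpleGraph V) (o : V)

lemma finite_setOf_exists_walk_length (hlocfin : ∀ v : V, (H.neighborSet v).Finite) :
    ∀ (n : ℕ) (x : V), {v | ∃ w : H.Walk x v, w.length = n}.Finite
  | 0, x => (finite_singleton x).subset fun v ⟨w, hw⟩ => (w.eq_of_length_eq_zero hw).symm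
  | n + 1, x => ((hlocfin x).biUnion fun u _ => finite_setOf_exists_walk_length hlocfin n u).subset
      fun v ⟨w, hw⟩ => by
        cases w with
        | nil => simp at hw
        | cons hadj w => exact mem_biUnion hadj ⟨w, by simpa using hw⟩

lemma countable_of_connected_of_finite_neighborSet (hconn : H.Connected)
    (hlocfin : ∀ v : V, (H.neighborSet v).Finite) : Countable V := by
  obtain ⟨x⟩ := hconn.nonempty
  refine countable_univ_iff.mp <| (countable_iUnion fun n =>
    (finite_setOf_exists_walk_length H hlocfin n x).countable).mono fun v _ => ?_
  obtain ⟨w⟩ := hconn.preconnected x v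
  exact mem_iUnion.mpr ⟨w.length, w, rfl⟩

lemma mem_cluster_iff (ω : Sym2 V → Bool) (v : V) :
    v ∈ cluster H o ω ↔ ∃ w : H.Walk o v, ∀ e ∈ w.edges, ω e = true := by
  constructor
  · rintro ⟨w⟩
    refine ⟨w.transfer H fun e he => ?_, fun e he => ?_⟩
    · induction e with
      | _ a b => exact (w.edges_subset_edgeSet he).1
    · rw [SimpleGraph.Walk.edges_transfer] at he
      induction e with
      | _ a b => exact (w.edges_subset_edgeSet he).2
  · rintro ⟨w, hw⟩
    refine ⟨w.transfer (openSub H ω) fun e he => ?_⟩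
    induction e with
    | _ a b => exact ⟨w.edges_subset_edgeSet he, hw _ he⟩

lemma cluster_mono {ω ω' : Sym2 V → Bool} (hω : ω ≤ ω') : cluster H o ω ⊆ cluster H o ω' :=
  fun _ hv => hv.mono fun a b (hab : H.Adj a b ∧ ω s(a, b) = true) =>
    ⟨hab.1, by simpa [hab.2, Bool.le_iff_imp] using hω s(a, b)⟩

lemma isUpperSet_setOf_clusterAtLeast (n : ℕ) :
    IsUpperSet {ω : Sym2 V → Bool | clusterAtLeast H o n ω} :=
  fun _ _ hω ⟨s, hs, hn⟩ => ⟨s, hs.trans (cluster_mono H o hω), hn⟩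

lemma exists_finset_eq_cluster_of_not_clusterAtLeast {n : ℕ} {ω : Sym2 V → Bool}
    (h : ¬ clusterAtLeast H o n ω) : ∃ s : Finset V, ↑s = cluster H o ω ∧ s.card < n := by
  have hfin : (cluster H o ω).Finite := by
    by_contra hinf
    obtain ⟨s, hs, hcard⟩ := Set.Infinite.exists_subset_card_eq hinf n
    exact h ⟨s, hs, hcard.ge⟩
  refine ⟨hfin.toFinset, hfin.coe_toFinset, ?_⟩
  by_contra! hle
  exact h ⟨hfin.toFinset, hfin.coe_toFinset.le, hle⟩

lemma iInter_setOf_clusterAtLeast :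
    ⋂ n : ℕ, {ω : Sym2 V → Bool | clusterAtLeast H o n ω} = {ω | (cluster H o ω).Infinite} := by
  ext ω
  simp only [mem_iInter, mem_ofPred_eq]
  refine ⟨fun h hfin => ?_, fun hinf n => ?_⟩
  · obtain ⟨t, ht, hcard⟩ := h (hfin.toFinset.card + 1)
    have := Finset.card_le_card fun v hv => hfin.mem_toFinset.mpr (ht hv)
    omega
  · obtain ⟨s, hs, hcard⟩ := hinf.exists_subset_card_eq n
    exact ⟨s, hs, hcard.ge⟩

lemma mag_nonneg (μe : Measure (Sym2 V → Bool)) (γv : Measure (V → Bool)) :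
    0 ≤ mag H o μe γv :=
  ENNReal.toReal_nonneg

lemma psiVol_le_one (n : ℕ) {μe : Measure (Sym2 V → Bool)} [IsProbabilityMeasure μe] :
    psiVol H o n μe ≤ 1 :=
  ENNReal.toReal_le_of_le_ofReal zero_le_one (by simpa using prob_le_one)

lemma pCrit_le_one (μ : ℝ → Measure (Sym2 V → Bool)) : pCrit H o μ ≤ 1 := by
  rcases eq_empty_or_nonempty {p | p ∈ Icc (0:ℝ) 1 ∧ 0 < theta H o (μ p)} with hS | ⟨p, hp⟩
  · rw [pCrit, hS, Real.sInf_empty]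
    exact zero_le_one
  · exact (csInf_le ⟨0, fun _ hq => hq.1.1⟩ hp).trans hp.1.2

lemma theta_eq_zero_of_lt_pCrit (μ : ℝ → Measure (Sym2 V → Bool)) {p : ℝ}
    (hp : p ∈ Icc (0:ℝ) 1) (hpc : p < pCrit H o μ) : theta H o (μ p) = 0 :=
  le_antisymm (not_lt.mp fun hpos => hpc.not_ge (csInf_le ⟨0, fun _ hq => hq.1.1⟩ ⟨hp, hpos⟩))
    ENNReal.toReal_nonneg

variable [Countable V]

lemma measurableSet_setOf_mem_cluster (v : V) :
    MeasurableSet {ω : Sym2 V → Bool | v ∈ cluster H o ω} := by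
  have : Countable (H.Walk o v) := SimpleGraph.Walk.support_injective.countable
  simp only [mem_cluster_iff, ofPred_exists, ofPred_forall]
  exact .iUnion fun w => .biInter w.edges.finite_toSet.countable fun e _ =>
    measurableSet_eq_fun (measurable_pi_apply e) measurable_const

lemma measurableSet_setOf_clusterAtLeast (n : ℕ) :
    MeasurableSet {ω : Sym2 V → Bool | clusterAtLeast H o n ω} := by
  simp only [clusterAtLeast, ofPred_exists, ofPred_and]
  refine .iUnion fun s => .inter ?_ (.const _)
  have hs : {ω | ↑s ⊆ cluster H o ω} = ⋂ v ∈ s, {ω | v ∈ cluster H o ω} := by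
    ext; simp [subset_def]
  rw [hs]
  exact Finset.measurableSet_biInter s fun v _ => measurableSet_setOf_mem_cluster H o v

lemma measurableSet_setOf_exists_mem_cluster :
    MeasurableSet {z : (Sym2 V → Bool) × (V → Bool) | ∃ v ∈ cluster H o z.1, z.2 v = true} := by
  have h : {z : (Sym2 V → Bool) × (V → Bool) | ∃ v ∈ cluster H o z.1, z.2 v = true} =
      ⋃ v, {ω | v ∈ cluster H o ω} ×ˢ {ζ | ζ v = true} := by
    ext z; simp
  rw [h]
  exact .iUnion fun v => (measurableSet_setOf_mem_cluster H o v).prod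
    (measurableSet_eq_fun (measurable_pi_apply v) measurable_const)

lemma psiVol_mono {μ : ℝ → Measure (Sym2 V → Bool)}
    (hμ : ∀ p ∈ Icc (0:ℝ) 1, IsBernoulliProduct p (μ p)) {p q : ℝ} (hp : 0 ≤ p) (hpq : p ≤ q)
    (hq : q ≤ 1) (n : ℕ) : psiVol H o n (μ p) ≤ psiVol H o n (μ q) := by
  rcases hpq.eq_or_lt with rfl | hlt
  · rfl
  have hq0 : 0 < q := hp.trans_lt hlt
  have hμq := hμ q ⟨hq0.le, hq⟩
  have := hμq.1
  exact ENNReal.toReal_mono (measure_ne_top _ _) <|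
    (hμ p ⟨hp, hpq.trans hq⟩).measure_le_of_isUpperSet hq0.le (by field_simp) hμq
      (hμ (p / q) ⟨div_nonneg hp hq0.le, div_le_one_of_le₀ hpq hq0.le⟩)
      (measurableSet_setOf_clusterAtLeast H o n) (isUpperSet_setOf_clusterAtLeast H o n)

lemma tendsto_psiVol_theta (μe : Measure (Sym2 V → Bool)) [IsFiniteMeasure μe] :
    Tendsto (fun n => psiVol H o n μe) atTop (𝓝 (theta H o μe)) := by
  have hanti : Antitone fun n : ℕ => {ω : Sym2 V → Bool | clusterAtLeast H o n ω} :=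
    fun _ _ hmn _ ⟨s, hs, hn⟩ => ⟨s, hs, hmn.trans hn⟩
  have h := tendsto_measure_iInter_atTop (μ := μe)
    (fun n => (measurableSet_setOf_clusterAtLeast H o n).nullMeasurableSet) hanti
    ⟨0, measure_ne_top _ _⟩
  rw [iInter_setOf_clusterAtLeast] at h
  exact (ENNReal.tendsto_toReal (measure_ne_top _ _)).comp h

lemma mag_le_psiVol_add {μe : Measure (Sym2 V → Bool)} [IsProbabilityMeasure μe]
    {γh : Measure (V → Bool)} {h : ℝ} (hh : 0 ≤ h)
    (hγ : IsBernoulliProduct (1 - Real.exp (-h)) γh) (N : ℕ) :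
    mag H o μe γh ≤ psiVol H o N μe + h * N := by
  have := hγ.1
  have hbound : (μe.prod γh) {z | ∃ v ∈ cluster H o z.1, z.2 v = true} ≤
      μe {ω | clusterAtLeast H o N ω} + ENNReal.ofReal (h * N) := by
    refine measure_prod_le_add (measurableSet_setOf_exists_mem_cluster H o)
      (measurableSet_setOf_clusterAtLeast H o N) fun ω hω => ?_
    obtain ⟨s, hs, hcard⟩ := exists_finset_eq_cluster_of_not_clusterAtLeast H o hω
    calc γh (Prod.mk ω ⁻¹' _) = γh {ζ | ∃ v ∈ s, ζ v = true} := by simp [← hs]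
      _ ≤ ENNReal.ofReal (h * s.card) := hγ.measure_setOf_exists_eq_true_le s
      _ ≤ ENNReal.ofReal (h * N) := by gcongr
  calc mag H o μe γh ≤ (μe {ω | clusterAtLeast H o N ω} + ENNReal.ofReal (h * N)).toReal :=
        ENNReal.toReal_mono (by finiteness) hbound
    _ = psiVol H o N μe + h * N := by
        rw [ENNReal.toReal_add (measure_ne_top _ _) ENNReal.ofReal_ne_top,
          ENNReal.toReal_ofReal (by positivity)]
        rfl

lemma tendsto_mag_of_theta_eq_zero {μe : Measure (Sym2 V → Bool)} [IsProbabilityMeasure μe]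
    (hθ : theta H o μe = 0) {γ : ℝ → Measure (V → Bool)}
    (hγ : ∀ h : ℝ, 0 < h → IsBernoulliProduct (1 - Real.exp (-h)) (γ h)) :
    Tendsto (fun h => mag H o μe (γ h)) (𝓝[>] 0) (𝓝 0) := by
  rw [Metric.tendsto_nhdsWithin_nhds]
  intro ε hε
  have hψ := tendsto_psiVol_theta H o μe
  rw [hθ] at hψ
  obtain ⟨N, hN⟩ := (hψ.eventually (gt_mem_nhds (half_pos hε))).exists
  refine ⟨ε / 2 / (N + 1), by positivity, fun h (hh : 0 < h) hdist => ?_⟩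
  rw [Real.dist_eq, sub_zero, abs_of_pos hh] at hdist
  have hhN : h * N ≤ ε / 2 := by
    rw [lt_div_iff₀ (by positivity)] at hdist
    nlinarith
  rw [Real.dist_eq, sub_zero, abs_of_nonneg (mag_nonneg H o μe (γ h))]
  linarith [mag_le_psiVol_add H o (μe := μe) hh.le (hγ h hh) N]

end Graph

theorem exponential_decay_of_near_critical_general {V : Type*} (H : SimpleGraph V) (o : V)
    (hconn : H.Connected)
    (hlocfin : ∀ v : V, (H.neighborSet v).Finite)
    (μ : ℝ → Measure (Sym2 V → Bool)) (hμ : ∀ p ∈ Set.Icc (0:ℝ) 1, IsBernoulliProduct p (μ p))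
    (γ : ℝ → Measure (V → Bool))
    (hγ : ∀ h : ℝ, 0 < h → IsBernoulliProduct (1 - Real.exp (-h)) (γ h))
    (hnear : ∀ p ∈ Set.Icc (0:ℝ) 1, ∀ h : ℝ, 0 < h →
      mag H o (μ p) (γ h) < 1 →
      ∀ n : ℕ,
        psiVol H o n (μ (p * (1 - mag H o (μ p) (γ h)))) ≤
          psiVol H o n (μ p) * Real.exp (-h * n) / (1 - mag H o (μ p) (γ h))) :
    ∀ p : ℝ, 0 ≤ p → p < pCrit H o μ →
      ∃ C > (0:ℝ), ∃ c > (0:ℝ), ∀ n : ℕ, psiVol H o n (μ p) ≤ C * Real.exp (-c * n) := by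
  intro p hp hpc
  have := countable_of_connected_of_finite_neighborSet H hconn hlocfin
  obtain ⟨p', hpp', hp'c⟩ := exists_between hpc
  have hp' : p' ∈ Icc (0:ℝ) 1 := ⟨by linarith, by linarith [pCrit_le_one H o μ]⟩
  have := (hμ p' hp').1
  have hθ := theta_eq_zero_of_lt_pCrit H o μ hp' hp'c
  have hgap : 0 < 1 - p / p' := by rw [sub_pos, div_lt_one (by linarith)]; linarith
  obtain ⟨h, hm, hh⟩ := (((tendsto_mag_of_theta_eq_zero H o hθ hγ).eventually
    (gt_mem_nhds hgap)).and self_mem_nhdsWithin).exists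
  set m := mag H o (μ p') (γ h)
  have hm0 : 0 ≤ m := mag_nonneg H o (μ p') (γ h)
  have hm1 : 0 < 1 - m := by linarith [div_nonneg hp hp'.1]
  have hpq : p ≤ p' * (1 - m) := by
    rw [← div_le_iff₀' (by linarith)]; linarith
  refine ⟨1 / (1 - m), by positivity, h, hh, fun n => ?_⟩
  calc psiVol H o n (μ p) ≤ psiVol H o n (μ (p' * (1 - m))) :=
        psiVol_mono H o hμ hp hpq (mul_le_one₀ hp'.2 hm1.le (by linarith)) n
    _ ≤ psiVol H o n (μ p') * Real.exp (-h * n) / (1 - m) := hnear p' hp' h hh (by linarith) n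
    _ ≤ 1 * Real.exp (-h * n) / (1 - m) := by gcongr; exact psiVol_le_one H o n
    _ = 1 / (1 - m) * Real.exp (-h * n) := by ring

/-- Assuming the near-critical inequality, the cluster volume has an exponential tail in the
whole subcritical phase: for every `p < p_c` there are `C, c > 0` with `ψ_n(p) ≤ C e^{-cn}`. -/
theorem exponential_decay_of_near_critical {V : Type*} (H : SimpleGraph V) (o : V)
    (hconn : H.Connected) (hinf : Infinite V)
    (hlocfin : ∀ v : V, (H.neighborSet v).Finite)
    (htrans : ∀ u v : V, ∃ φ : H ≃g H, φ u = v)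
    (μ : ℝ → Measure (Sym2 V → Bool)) (hμ : ∀ p ∈ Set.Icc (0:ℝ) 1, IsBernoulliProduct p (μ p))
    (γ : ℝ → Measure (V → Bool))
    (hγ : ∀ h : ℝ, 0 < h → IsBernoulliProduct (1 - Real.exp (-h)) (γ h))
    (hnear : ∀ p ∈ Set.Icc (0:ℝ) 1, ∀ h : ℝ, 0 < h →
      mag H o (μ p) (γ h) < 1 →
      ∀ n : ℕ,
        psiVol H o n (μ (p * (1 - mag H o (μ p) (γ h)))) ≤
          psiVol H o n (μ p) * Real.exp (-h * n) / (1 - mag H o (μ p) (γ h))) :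
    ∀ p : ℝ, 0 ≤ p → p < pCrit H o μ →
      ∃ C > (0:ℝ), ∃ c > (0:ℝ), ∀ n : ℕ, psiVol H o n (μ p) ≤ C * Real.exp (-c * n) :=
  exponential_decay_of_near_critical_general H o hconn hlocfin μ hμ γ hγ hnear
end
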